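/- For all real x ∈ (0.5, 1.5), x·log(x) ≥ (x − 1) + (1/3)(x − 1)². -/

import Mathlib

/-!
The gap `g x = x log x - (x - 1) - (x - 1)² / 3` vanishes at `1` and has derivative
`log x - 2 (x - 1) / 3`. This derivative is `≤ 0` on `(0, 1]` because `log x ≤ x - 1`, and `≥ 0`
on `[1, 3/2]` because `log x ≥ 1 - 1/x = (x - 1) / x ≥ 2 (x - 1) / 3`. Hence `g` has its minimum
at `1`.
-/

open Real Set

namespace Real

lemma log_le_mul_sub_one {x c : ℝ} (hx₀ : 0 < x) (hx₁ : x ≤ 1) (hc : c ≤ 1) :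
    log x ≤ c * (x - 1) := by
  nlinarith [log_le_sub_one_of_pos hx₀]

lemma mul_sub_one_le_log {x c : ℝ} (hx : 1 ≤ x) (hcx : c * x ≤ 1) :
    c * (x - 1) ≤ log x := by
  have hx₀ : 0 < x := by linarith
  have h : c * (x - 1) ≤ 1 - x⁻¹ := by
    rw [show 1 - x⁻¹ = (x - 1) / x by field_simp, le_div_iff₀ hx₀]
    nlinarith
  exact h.trans (one_sub_inv_le_log_of_pos hx₀)

lemma hasDerivAt_mul_log_sub_quadratic {x : ℝ} (hx : x ≠ 0) :
    HasDerivAt (fun t ↦ t * log t - ((t - 1) + 1 / 3 * (t - 1) ^ 2))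
      (log x - 2 / 3 * (x - 1)) x := by
  have hq := ((hasDerivAt_id' x).sub_const 1).add
    ((((hasDerivAt_id' x).sub_const 1).pow 2).const_mul (1 / 3))
  exact ((hasDerivAt_mul_log hx).sub hq).congr_deriv (by ring)

end Real

/-- For all real `x ∈ (0.5, 1.5)`, `x log x ≥ (x-1) + (1/3)(x-1)²`. -/
theorem xlogx_ge (x : ℝ) (hx : x ∈ Set.Ioo (0.5 : ℝ) 1.5) :
    x * Real.log x ≥ (x - 1) + (1/3) * (x - 1)^2 := by
  set g : ℝ → ℝ := fun t ↦ t * log t - ((t - 1) + 1 / 3 * (t - 1) ^ 2)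
  have hg' : ∀ t, 0 < t → HasDerivAt g (log t - 2 / 3 * (t - 1)) t := fun t ht ↦
    hasDerivAt_mul_log_sub_quadratic ht.ne'
  have hmin : IsMinOn g (Ioo (1 / 2) (3 / 2)) 1 := by
    refine isMinOn_Ioo_of_deriv (hg' 1 one_pos).continuousAt
      (fun t ht ↦ (hg' t (by linarith [ht.1])).differentiableAt.differentiableWithinAt)
      (fun t ht ↦ (hg' t (by linarith [ht.1])).differentiableAt.differentiableWithinAt) ?_ ?_
    · intro t ⟨ht₀, ht₁⟩
      rw [(hg' t (by linarith)).deriv, sub_nonpos]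
      exact log_le_mul_sub_one (by linarith) ht₁.le (by norm_num)
    · intro t ⟨ht₁, ht₂⟩
      rw [(hg' t (by linarith)).deriv, sub_nonneg]
      exact mul_sub_one_le_log ht₁.le (by linarith)
  have h := hmin (by norm_num at hx ⊢; exact hx)
  norm_num [g] at h
  linarith
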